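/- arXiv:2202.06487 — 7 statements merged into one kernel-verified Lean document; each statement's English description precedes it below -/
import Mathlib

section
/- For all integers n ≥ 1 and k with 1 ≤ k ≤ n, we have (2n/k) · C(n+k-1, n) · C(n-1, n-k) = C(2k, k) · C(n+k-1, n-k), where C denotes the binomial coefficient. Equivalently, 2n · C(n+k-1, n) · C(n-1, n-k) = k · C(2k, k) · C(n+k-1, n-k). -/
theorem binom_identity (n k : ℕ) (hn : 1 ≤ n) (hk : 1 ≤ k) (hkn : k ≤ n) :
    2 * n * Nat.choose (n + k - 1) n * Nat.choose (n - 1) (n - k) =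
      k * (Nat.choose (2 * k) k * Nat.choose (n + k - 1) (n - k)) := by
  obtain ⟨j, rfl⟩ := Nat.exists_eq_add_of_le hk
  obtain ⟨d, rfl⟩ := Nat.exists_eq_add_of_le hkn
  have h1 : 1 + j + d + (1 + j) - 1 = 2 * j + d + 1 := by omega
  have h2 : 1 + j + d - 1 = j + d := by omega
  have h3 : 1 + j + d - (1 + j) = d := by omega
  rw [h1, h2, h3]
  have key : (2 * (1 + j + d) * Nat.choose (2 * j + d + 1) (1 + j + d) *
      Nat.choose (j + d) d : ℚ) =
      (1 + j) * (Nat.choose (2 * (1 + j)) (1 + j) * Nat.choose (2 * j + d + 1) d) := by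
    rw [Nat.cast_choose ℚ (show 1 + j + d ≤ 2 * j + d + 1 by omega),
        Nat.cast_choose ℚ (show d ≤ j + d by omega),
        Nat.cast_choose ℚ (show 1 + j ≤ 2 * (1 + j) by omega),
        Nat.cast_choose ℚ (show d ≤ 2 * j + d + 1 by omega)]
    have e1 : 2 * j + d + 1 - (1 + j + d) = j := by omega
    have e2 : j + d - d = j := by omega
    have e3 : 2 * (1 + j) - (1 + j) = 1 + j := by omega
    have e4 : 2 * j + d + 1 - d = 2 * j + 1 := by omega
    rw [e1, e2, e3, e4]
    have f1 : ((Nat.factorial (1 + j + d) : ℚ)) = (1 + j + d) * Nat.factorial (j + d) := by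
      rw [show 1 + j + d = (j + d) + 1 by omega, Nat.factorial_succ]; push_cast; ring
    have f2 : ((Nat.factorial (2 * (1 + j)) : ℚ)) = (2 * j + 2) * Nat.factorial (2 * j + 1) := by
      rw [show 2 * (1 + j) = (2 * j + 1) + 1 by omega, Nat.factorial_succ]; push_cast; ring
    have f3 : ((Nat.factorial (1 + j) : ℚ)) = (1 + j) * Nat.factorial j := by
      rw [show 1 + j = j + 1 by omega, Nat.factorial_succ]; push_cast; ring
    rw [f1, f2, f3]
    have p1 : ((Nat.factorial (j + d) : ℚ)) ≠ 0 := by positivity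
    have p2 : ((Nat.factorial (2 * j + 1) : ℚ)) ≠ 0 := by positivity
    have p3 : ((Nat.factorial j : ℚ)) ≠ 0 := by positivity
    have p4 : ((Nat.factorial d : ℚ)) ≠ 0 := by positivity
    have p6 : (1 + (j:ℚ) + d) ≠ 0 := by positivity
    have p7 : (1 + (j:ℚ)) ≠ 0 := by positivity
    field_simp
    ring
  exact_mod_cast key
end

section
/- For all n ≥ 1 and 1 ≤ k ≤ n, the number of differed Delannoy paths ending at (n,n) with exactly k R-steps equals C(2k,k) · C(n+k-1, n-k). -/
/-!
A path is its word of steps, so the paths in `Del n k` are the arrangements of the multiset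
`R^k U^k D^(n-k)`, counted by the multinomial coefficient `(n+k)! / (k! k! (n-k)!)`. A differed path
is `R` or `U` followed by an arrangement of `R^(k-1) U^k D^(n-k)` or of `R^k U^(k-1) D^(n-k)`; these
number `C(n+k-1, n-k) C(2k-1, k)` and `C(n+k-1, n-k) C(2k-1, k-1)`, which add up to the claim by
Pascal's rule. That arrangements of a multiset `m` are counted by `m.countPerms` follows by
splitting off the first letter, from the recursion `countPerms m = ∑ a ∈ m, countPerms (m.erase a)`.
-/

/-- Step vectors for Delannoy paths. -/
def Rstep : ℕ × ℕ := (1, 0)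
def Ustep : ℕ × ℕ := (0, 1)
def Dstep : ℕ × ℕ := (1, 1)

/-- A list of steps is a Delannoy path if each step is R, U or D. -/
def IsDelannoyPath (l : List (ℕ × ℕ)) : Prop := ∀ s ∈ l, s = Rstep ∨ s = Ustep ∨ s = Dstep

/-- Endpoint of a path starting at the origin. -/
def pathEnd (l : List (ℕ × ℕ)) : ℕ × ℕ := ((l.map Prod.fst).sum, (l.map Prod.snd).sum)

/-- Delannoy paths from (0,0) to (n,n) with exactly k R-steps. -/
def Del (n k : ℕ) : Set (List (ℕ × ℕ)) :=
  {l | IsDelannoyPath l ∧ pathEnd l = (n, n) ∧ l.count Rstep = k}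

/-- Differed Delannoy paths: first step is not D. -/
def DiffDel (n k : ℕ) : Set (List (ℕ × ℕ)) :=
  {l | l ∈ Del n k ∧ l.head? ≠ some Dstep}

open Nat Multiset

theorem List.disjoint_image_cons {α : Type*} {a b : α} (hab : a ≠ b) (s t : Set (List α)) :
    _root_.Disjoint (List.cons a '' s) (List.cons b '' t) :=
  Set.disjoint_left.2 fun _ ⟨_, _, ha⟩ ⟨_, _, hb⟩ => hab (List.cons_eq_cons.1 (ha.trans hb.symm)).1

namespace Multiset

variable {α : Type*} [DecidableEq α]

theorem prod_factorial_count_mul_countPerms {m : Multiset α} {s : Finset α}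
    (hs : ∀ a ∈ m, a ∈ s) : (∏ a ∈ s, (m.count a)!) * m.countPerms = (card m)! := by
  have hsupp : m.toFinsupp.support ⊆ s := fun a ha => hs a (by simpa using ha)
  simpa [countPerms, ← Finsupp.multinomial_of_support_subset hsupp, sum_count_eq_card hs] using
    Nat.multinomial_spec s m.toFinsupp

theorem count_mul_prod_factorial_count_erase {m : Multiset α} {a : α} (ha : a ∈ m) :
    m.count a * ∏ x ∈ m.toFinset, ((m.erase a).count x)! = ∏ x ∈ m.toFinset, (m.count x)! := by
  have ha' : a ∈ m.toFinset := mem_toFinset.2 ha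
  rw [← Finset.mul_prod_erase _ _ ha', ← Finset.mul_prod_erase _ (fun x => (m.count x)!) ha',
    count_erase_self, ← mul_assoc, Nat.mul_factorial_pred (count_ne_zero.2 ha)]
  congr 1
  exact Finset.prod_congr rfl fun x hx => by rw [count_erase_of_ne (Finset.ne_of_mem_erase hx)]

theorem countPerms_eq_sum_countPerms_erase {m : Multiset α} (hm : m ≠ 0) :
    m.countPerms = ∑ a ∈ m.toFinset, (m.erase a).countPerms := by
  set P := ∏ a ∈ m.toFinset, (m.count a)! with hP
  refine Nat.eq_of_mul_eq_mul_left (Finset.prod_pos fun a _ => factorial_pos _ : 0 < P) ?_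
  calc P * m.countPerms
      = card m * (card m - 1)! := by
        rw [prod_factorial_count_mul_countPerms fun a ha => mem_toFinset.2 ha,
          Nat.mul_factorial_pred (mt card_eq_zero.1 hm)]
    _ = ∑ a ∈ m.toFinset, m.count a * (card m - 1)! := by
        rw [← Finset.sum_mul, toFinset_sum_count_eq]
    _ = ∑ a ∈ m.toFinset, P * (m.erase a).countPerms := by
        refine Finset.sum_congr rfl fun a ha => ?_
        have ha := mem_toFinset.1 ha
        rw [hP, ← count_mul_prod_factorial_count_erase ha, mul_assoc,
          prod_factorial_count_mul_countPerms fun x hx => mem_toFinset.2 (mem_of_mem_erase hx),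
          card_erase_of_mem ha, Nat.pred_eq_sub_one]
    _ = P * ∑ a ∈ m.toFinset, (m.erase a).countPerms := (Finset.mul_sum ..).symm

theorem coe_cons_eq_iff {a : α} {t : List α} {m : Multiset α} :
    ((a :: t : List α) : Multiset α) = m ↔ a ∈ m ∧ (t : Multiset α) = m.erase a := by
  rw [← cons_coe]
  constructor
  · rintro rfl
    exact ⟨mem_cons_self a _, (erase_cons_head a _).symm⟩
  · rintro ⟨ha, ht⟩
    rw [ht, cons_erase ha]

theorem setOf_coe_eq_eq_biUnion {m : Multiset α} (hm : m ≠ 0) :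
    {l : List α | (l : Multiset α) = m} =
      ⋃ a ∈ (m.toFinset : Set α), List.cons a '' {t : List α | (t : Multiset α) = m.erase a} := by
  ext (_ | ⟨a, t⟩)
  · simp [eq_comm, hm]
  · simp [coe_cons_eq_iff, and_comm]

theorem encard_setOf_coe_eq (m : Multiset α) :
    {l : List α | (l : Multiset α) = m}.encard = m.countPerms := by
  induction h : card m generalizing m with
  | zero => simp [card_eq_zero.1 h]
  | succ n ih =>
    have hm : m ≠ 0 := fun h0 => by simp [h0] at h
    rw [setOf_coe_eq_eq_biUnion hm,
      (Finset.finite_toSet _).encard_biUnion fun a _ b _ hab => List.disjoint_image_cons hab _ _,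
      finsum_mem_coe_finset, countPerms_eq_sum_countPerms_erase hm, Nat.cast_sum]
    refine Finset.sum_congr rfl fun a ha => ?_
    rw [List.cons_injective.encard_image, ih _ (by simp [card_erase_of_mem (mem_toFinset.1 ha), h])]

/-- In `Del`, `List.count` uses the componentwise `BEq` instance on pairs, not the one derived from
`DecidableEq` that `Multiset.count` uses. -/
theorem coe_count_prod {β : Type*} [DecidableEq β] (x : α × β) (l : List (α × β)) :
    (l : Multiset (α × β)).count x = l.count x := by
  rw [coe_count]
  congr!

end Multiset

def stepMultiset (r u d : ℕ) : Multiset (ℕ × ℕ) :=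
  replicate r Rstep + replicate u Ustep + replicate d Dstep

theorem eq_step_of_mem_stepMultiset {x : ℕ × ℕ} {r u d : ℕ} (hx : x ∈ stepMultiset r u d) :
    x = Rstep ∨ x = Ustep ∨ x = Dstep := by
  simp only [stepMultiset, mem_add, mem_replicate] at hx
  tauto

theorem stepMultiset_succ_left (r u d : ℕ) :
    stepMultiset (r + 1) u d = Rstep ::ₘ stepMultiset r u d := by
  simp [stepMultiset, replicate_succ]

theorem stepMultiset_succ_mid (r u d : ℕ) :
    stepMultiset r (u + 1) d = Ustep ::ₘ stepMultiset r u d := by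
  simp [stepMultiset, replicate_succ]

theorem countPerms_stepMultiset (r u d : ℕ) :
    (stepMultiset r u d).countPerms = (r + u + d).choose d * (r + u).choose u := by
  have hspec : r ! * (u ! * d !) * (stepMultiset r u d).countPerms = (r + u + d)! := by
    simpa [stepMultiset, count_replicate, Rstep, Ustep, Dstep] using
      prod_factorial_count_mul_countPerms (m := stepMultiset r u d) (s := {Rstep, Ustep, Dstep})
        fun x hx => by simpa using eq_step_of_mem_stepMultiset hx
  refine Nat.eq_of_mul_eq_mul_left (by positivity : 0 < r ! * (u ! * d !)) (hspec.trans ?_)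
  rw [← add_choose_mul_factorial_mul_factorial (r + u) d,
    ← add_choose_mul_factorial_mul_factorial r u]
  ring

theorem IsDelannoyPath.coe_eq_stepMultiset {l : List (ℕ × ℕ)} (hl : IsDelannoyPath l) :
    (l : Multiset (ℕ × ℕ)) = stepMultiset (l.count Rstep) (l.count Ustep) (l.count Dstep) := by
  ext x
  rw [coe_count_prod]
  by_cases hx : x = Rstep ∨ x = Ustep ∨ x = Dstep
  · rcases hx with rfl | rfl | rfl <;> simp [stepMultiset, count_replicate, Rstep, Ustep, Dstep]
  · push Not at hx
    rw [List.count_eq_zero.2 fun h => by simpa [hx] using hl x h]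
    simp [stepMultiset, count_replicate, hx.1.symm, hx.2.1.symm, hx.2.2.symm]

theorem pathEnd_of_coe_eq_stepMultiset {l : List (ℕ × ℕ)} {r u d : ℕ}
    (h : (l : Multiset (ℕ × ℕ)) = stepMultiset r u d) : pathEnd l = (r + d, u + d) := by
  have hsum (f : ℕ × ℕ → ℕ) : (l.map f).sum = r * f Rstep + u * f Ustep + d * f Dstep := by
    rw [← Multiset.sum_coe, ← Multiset.map_coe, h]
    simp [stepMultiset]
  simp [pathEnd, hsum, Rstep, Ustep, Dstep]

theorem mem_del_iff {n k : ℕ} (hkn : k ≤ n) {l : List (ℕ × ℕ)} :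
    l ∈ Del n k ↔ (l : Multiset (ℕ × ℕ)) = stepMultiset k k (n - k) := by
  constructor
  · rintro ⟨hl, hend, rfl⟩
    have hcoe := hl.coe_eq_stepMultiset
    rw [pathEnd_of_coe_eq_stepMultiset hcoe, Prod.mk.injEq] at hend
    rw [hcoe]
    congr 1 <;> omega
  · intro h
    refine ⟨fun x hx => eq_step_of_mem_stepMultiset (h ▸ Multiset.mem_coe.2 hx), ?_, ?_⟩
    · rw [pathEnd_of_coe_eq_stepMultiset h, Nat.add_sub_cancel' hkn]
    · rw [← coe_count_prod, h]
      simp [stepMultiset, count_replicate, Rstep, Ustep, Dstep]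

theorem diffDel_eq_union {n k : ℕ} (hk : 1 ≤ k) (hkn : k ≤ n) :
    DiffDel n k = List.cons Rstep '' {t | (t : Multiset _) = stepMultiset (k - 1) k (n - k)} ∪
      List.cons Ustep '' {t | (t : Multiset _) = stepMultiset k (k - 1) (n - k)} := by
  obtain ⟨j, rfl⟩ : ∃ j, k = j + 1 := ⟨k - 1, by omega⟩
  have hR := congrArg (·.erase Rstep) (stepMultiset_succ_left j (j + 1) (n - (j + 1)))
  have hU := congrArg (·.erase Ustep) (stepMultiset_succ_mid (j + 1) j (n - (j + 1)))
  simp only [erase_cons_head] at hR hU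
  ext (_ | ⟨a, t⟩)
  · simp [DiffDel, mem_del_iff hkn, eq_comm, stepMultiset]
  · simp only [DiffDel, Set.mem_ofPred_eq, mem_del_iff hkn, coe_cons_eq_iff, List.head?_cons,
      ne_eq, Option.some.injEq, Nat.add_sub_cancel, Set.mem_union, Set.mem_image,
      List.cons_eq_cons]
    constructor
    · rintro ⟨⟨ha, ht⟩, hD⟩
      rcases eq_step_of_mem_stepMultiset ha with rfl | rfl | rfl
      · exact Or.inl ⟨t, hR ▸ ht, rfl, rfl⟩
      · exact Or.inr ⟨t, hU ▸ ht, rfl, rfl⟩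
      · exact absurd rfl hD
    · rintro (⟨t, ht, rfl, rfl⟩ | ⟨t, ht, rfl, rfl⟩)
      · exact ⟨⟨by simp [stepMultiset], hR ▸ ht⟩, by decide⟩
      · exact ⟨⟨by simp [stepMultiset], hU ▸ ht⟩, by decide⟩

theorem diffDel_count_general (n k : ℕ) (hk : 1 ≤ k) (hkn : k ≤ n) :
    (DiffDel n k).ncard = Nat.choose (2 * k) k * Nat.choose (n + k - 1) (n - k) := by
  rw [Set.ncard_def, diffDel_eq_union hk hkn,
    Set.encard_union_eq (List.disjoint_image_cons (by decide) _ _),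
    List.cons_injective.encard_image, List.cons_injective.encard_image, encard_setOf_coe_eq,
    encard_setOf_coe_eq, countPerms_stepMultiset, countPerms_stepMultiset, ← Nat.cast_add,
    ENat.toNat_natCast]
  obtain ⟨j, rfl⟩ : ∃ j, k = j + 1 := ⟨k - 1, by omega⟩
  have hlen : j + (j + 1) + (n - (j + 1)) = n + (j + 1) - 1 := by omega
  rw [Nat.add_sub_cancel, add_comm (j + 1) j, hlen, show 2 * (j + 1) = 2 * j + 1 + 1 by ring,
    Nat.choose_succ_succ, show j + (j + 1) = 2 * j + 1 by ring]
  ring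

theorem diffDel_count (n k : ℕ) (hn : 1 ≤ n) (hk : 1 ≤ k) (hkn : k ≤ n) :
    (DiffDel n k).ncard = Nat.choose (2 * k) k * Nat.choose (n + k - 1) (n - k) :=
  diffDel_count_general n k hk hkn
end

section
/- For i ≥ 1, j ≥ 0 and 0 ≤ r ≤ i-1, the number of Kimberling paths from (0,0) to (i,j) with exactly r internal vertices (equivalently, r+1 steps) equals C(i-1, r) · C(r+j, r). -/
/-- Kimberling paths from (0,0) to (i,j). -/
def Kimb (i j : ℕ) : Set (List (ℕ × ℕ)) :=
  {l | (∀ s ∈ l, 1 ≤ s.1) ∧ pathEnd l = (i, j)}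

/-- Kimberling paths from (0,0) to (i,j) with r internal vertices, i.e. r+1 steps. -/
def KimbR (i j r : ℕ) : Set (List (ℕ × ℕ)) :=
  {l | l ∈ Kimb i j ∧ l.length = r + 1}

theorem card_tuple_sum_eq_choose (k n : ℕ) :
    Nat.card {f : Fin (k + 1) → ℕ // ∑ a, f a = n} = (k + n).choose k := by
  rw [← Nat.card_congr (Sym.equivNatSumOfFintype (Fin (k + 1)) n), Sym.natCard_sym_eq_choose,
    Nat.card_fin, Nat.add_right_comm, Nat.add_sub_cancel, Nat.choose_symm_add]

theorem pathEnd_ofFn {m : ℕ} (v : Fin m → ℕ × ℕ) :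
    pathEnd (List.ofFn v) = (∑ a, (v a).1, ∑ a, (v a).2) := by
  simp [pathEnd, List.sum_ofFn]

def pathOfTuples {m : ℕ} (f g : Fin m → ℕ) : List (ℕ × ℕ) :=
  List.ofFn fun a => (f a + 1, g a)

theorem pathOfTuples_injective (m : ℕ) :
    Function.Injective fun p : (Fin m → ℕ) × (Fin m → ℕ) => pathOfTuples p.1 p.2 := by
  rintro ⟨f, g⟩ ⟨f', g'⟩ h
  have h := List.ofFn_injective h
  simp only [funext_iff, Prod.mk.injEq, Nat.add_right_cancel_iff] at h
  exact Prod.ext (funext fun a => (h a).1) (funext fun a => (h a).2)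

theorem kimbR_eq_image (n j r : ℕ) :
    KimbR (n + r + 1) j r =
      (fun p : (Fin (r + 1) → ℕ) × (Fin (r + 1) → ℕ) => pathOfTuples p.1 p.2) ''
        ({f | ∑ a, f a = n} ×ˢ {g | ∑ a, g a = j}) := by
  ext l
  obtain ⟨m, v, rfl⟩ : ∃ m, ∃ v : Fin m → ℕ × ℕ, List.ofFn v = l := ⟨_, _, List.ofFn_get l⟩
  simp only [KimbR, Kimb, Set.mem_ofPred_eq, pathEnd_ofFn, List.length_ofFn, List.mem_ofFn,
    Set.mem_image, Set.mem_prod, Prod.mk.injEq, pathOfTuples, forall_exists_index,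
    forall_apply_eq_imp_iff, Prod.exists]
  constructor
  · rintro ⟨⟨hpos, hfst, hsnd⟩, rfl⟩
    refine ⟨fun a => (v a).1 - 1, fun a => (v a).2, ⟨?_, hsnd⟩, ?_⟩
    · show ∑ a, ((v a).1 - 1) = n
      have hsum : ∑ a, ((v a).1 - 1 + 1) = ∑ a, (v a).1 :=
        Finset.sum_congr rfl fun a _ => Nat.sub_add_cancel (hpos a)
      simp only [Finset.sum_add_distrib, Finset.sum_const, Finset.card_univ, Fintype.card_fin,
        smul_eq_mul, mul_one] at hsum
      omega
    · congr 1
      funext a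
      simp [Nat.sub_add_cancel (hpos a)]
  · rintro ⟨f, g, ⟨hf, hg⟩, h⟩
    obtain rfl : r + 1 = m := by simpa using congrArg List.length h
    obtain rfl := List.ofFn_injective h
    simp [Finset.sum_add_distrib, hf, hg]
    omega

theorem kimberling_count (i j r : ℕ) (hi : 1 ≤ i) (hr : r ≤ i - 1) :
    (KimbR i j r).ncard = Nat.choose (i - 1) r * Nat.choose (r + j) r := by
  obtain ⟨n, rfl⟩ : ∃ n, i = n + r + 1 := ⟨i - 1 - r, by omega⟩
  rw [kimbR_eq_image, Set.ncard_image_of_injective _ (pathOfTuples_injective _), Set.ncard_prod,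
    ← Nat.card_coe_set_eq, ← Nat.card_coe_set_eq]
  simp only [Set.coe_ofPred, card_tuple_sum_eq_choose, Nat.add_sub_cancel, Nat.add_comm n r]
end

section
/- For n ≥ 1 and 0 ≤ k ≤ n-1, the number of subgraphs G = (V,E) of the path graph P_n with n ∈ V and |E| = k equals ∑_{r=0}^{n-k-1} C(n-k-1, r) · C(r+k, r). -/
/-!
Encode a subgraph of the path on the vertices `0, …, m` by the indicator vectors of its vertices
and of its edges `{i, i + 1}`; the only constraint is that a chosen edge has both endpoints chosen.
Let `F m k` count such configurations with `k` edges that contain the last vertex, and `H m k` all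
configurations with `k` edges. Splitting off the last vertex and the last edge gives
`F (m + 1) (k + 1) = F m k + H m (k + 1)`, `F (m + 1) 0 = H m 0` and
`H (m + 1) k = F (m + 1) k + H m k`, and Pascal's rule shows that the binomial sums
`F m k = ∑ r, C(m - k, r) C(r + k, r)` and `H m k = [k = 0] + ∑ r, C(m + 1 - k, r + 1) C(r + k, r)`
satisfy the same recurrences.
-/

open Finset SimpleGraph

theorem Fin.card_filter_snoc_prod {m n : ℕ} {β γ : Type*} [Fintype β] [Fintype γ]
    (P : (Fin (m + 1) → β) × (Fin (n + 1) → γ) → Prop) [DecidablePred P] :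
    #{p | P p} =
      ∑ b, ∑ c, #{p : (Fin m → β) × (Fin n → γ) | P (Fin.snoc p.1 b, Fin.snoc p.2 c)} := by
  let e : (β × γ) × (Fin m → β) × (Fin n → γ) ≃ (Fin (m + 1) → β) × (Fin (n + 1) → γ) :=
    (Equiv.prodProdProdComm _ _ _ _).trans
      ((Fin.snocEquiv fun _ => β).prodCongr (Fin.snocEquiv fun _ => γ))
  rw [card_filter, ← e.sum_comp, Fintype.sum_prod_type, Fintype.sum_prod_type]
  simp only [card_filter]
  rfl

namespace PathSubgraph

def Compatible {n : ℕ} (v : Fin (n + 1) → Bool) (e : Fin n → Bool) : Prop :=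
  ∀ i, e i = true → v i.castSucc = true ∧ v i.succ = true

instance {n : ℕ} (v : Fin (n + 1) → Bool) (e : Fin n → Bool) : Decidable (Compatible v e) := by
  unfold Compatible; infer_instance

theorem compatible_snoc {n : ℕ} (v : Fin (n + 1) → Bool) (e : Fin n → Bool) (b c : Bool) :
    Compatible (Fin.snoc v b) (Fin.snoc e c) ↔
      Compatible v e ∧ (c = true → v (Fin.last n) = true ∧ b = true) := by
  simp [Compatible, Fin.forall_fin_succ', Fin.succ_castSucc, -Fin.castSucc_succ]

def edgeCount {n : ℕ} (e : Fin n → Bool) : ℕ := ∑ i, (e i).toNat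

theorem edgeCount_snoc {n : ℕ} (e : Fin n → Bool) (c : Bool) :
    edgeCount (Fin.snoc e c) = edgeCount e + c.toNat := by
  simp [edgeCount, Fin.sum_univ_castSucc]

theorem edgeCount_le {n : ℕ} (e : Fin n → Bool) : edgeCount e ≤ n := by
  unfold edgeCount
  simpa using sum_le_card_nsmul univ (fun i => (e i).toNat) 1 fun i _ => Bool.toNat_le _

theorem edgeCount_eq_ncard {n : ℕ} (e : Fin n → Bool) : edgeCount e = {i | e i = true}.ncard := by
  rw [Set.ncard_eq_toFinset_card', Set.toFinset_ofPred, card_filter]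
  exact sum_congr rfl fun i _ => by cases e i <;> rfl

def anchoredCount (n k : ℕ) : ℕ :=
  #{p : (Fin (n + 1) → Bool) × (Fin n → Bool) |
    Compatible p.1 p.2 ∧ p.1 (Fin.last n) = true ∧ edgeCount p.2 = k}

def totalCount (n k : ℕ) : ℕ :=
  #{p : (Fin (n + 1) → Bool) × (Fin n → Bool) | Compatible p.1 p.2 ∧ edgeCount p.2 = k}

theorem anchoredCount_zero_zero : anchoredCount 0 0 = 1 := by decide

theorem totalCount_zero_zero : totalCount 0 0 = 2 := by decide

theorem totalCount_eq_zero {n k : ℕ} (h : n < k) : totalCount n k = 0 := by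
  simp only [totalCount, card_eq_zero, filter_eq_empty_iff]
  exact fun p _ hp => (edgeCount_le p.2).not_gt (hp.2 ▸ h)

theorem totalCount_succ (n k : ℕ) :
    totalCount (n + 1) k = anchoredCount (n + 1) k + totalCount n k := by
  simp only [totalCount, anchoredCount, Fin.card_filter_snoc_prod, Fintype.sum_bool]
  simp [compatible_snoc, edgeCount_snoc, and_assoc]

theorem anchoredCount_succ_zero (n : ℕ) : anchoredCount (n + 1) 0 = totalCount n 0 := by
  simp only [totalCount, anchoredCount, Fin.card_filter_snoc_prod, Fintype.sum_bool]
  simp [compatible_snoc, edgeCount_snoc]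

theorem anchoredCount_succ_succ (n k : ℕ) :
    anchoredCount (n + 1) (k + 1) = anchoredCount n k + totalCount n (k + 1) := by
  simp only [totalCount, anchoredCount, Fin.card_filter_snoc_prod, Fintype.sum_bool]
  simp [compatible_snoc, edgeCount_snoc, and_assoc]

def anchoredFormula (b k : ℕ) : ℕ := ∑ r ∈ range (b + 1), b.choose r * (r + k).choose r

def totalFormula (b k : ℕ) : ℕ := ∑ r ∈ range b, b.choose (r + 1) * (r + k).choose r

theorem anchoredFormula_zero_right (b : ℕ) : anchoredFormula b 0 = totalFormula b 0 + 1 := by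
  simp [anchoredFormula, totalFormula, sum_range_succ']

theorem totalFormula_succ_left (b k : ℕ) :
    totalFormula (b + 1) k = anchoredFormula b k + totalFormula b k := by
  simp only [anchoredFormula, totalFormula, Nat.choose_succ_succ', add_mul, sum_add_distrib,
    sum_range_succ _ b, Nat.choose_succ_self, zero_mul, add_zero]
  ring

theorem anchoredFormula_succ_right (b k : ℕ) :
    anchoredFormula b (k + 1) = anchoredFormula b k + totalFormula b (k + 1) := by
  have pascal (s : ℕ) : (s + 1 + (k + 1)).choose (s + 1) =
      (s + 1 + k).choose (s + 1) + (s + (k + 1)).choose s := by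
    rw [show s + 1 + (k + 1) = s + 1 + k + 1 by ring, Nat.choose_succ_succ', add_comm,
      show s + 1 + k = s + (k + 1) by ring]
  simp only [anchoredFormula, totalFormula, sum_range_succ' _ b, pascal, mul_add, sum_add_distrib,
    Nat.choose_zero_right, mul_one]
  ring

-- The `if` term counts the configuration without vertices; for `k > n + 1` the truncated
-- subtraction makes `totalFormula (n + 1 - k) k` an empty sum.
theorem anchoredCount_eq_and_totalCount_eq (n : ℕ) :
    (∀ k ≤ n, anchoredCount n k = anchoredFormula (n - k) k) ∧
      ∀ k, totalCount n k = totalFormula (n + 1 - k) k + if k = 0 then 1 else 0 := by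
  induction n with
  | zero =>
    refine ⟨fun k hk => ?_, fun k => ?_⟩
    · obtain rfl : k = 0 := by omega
      rw [anchoredCount_zero_zero]
      rfl
    · rcases k with _ | k
      · rw [totalCount_zero_zero]
        rfl
      · simp [totalCount_eq_zero, totalFormula]
  | succ n ih =>
    have anchored : ∀ k ≤ n + 1, anchoredCount (n + 1) k = anchoredFormula (n + 1 - k) k
      | 0, _ => by rw [anchoredCount_succ_zero, ih.2, anchoredFormula_zero_right, if_pos rfl]
      | k + 1, hk => by
        rw [anchoredCount_succ_succ, ih.1 k (by omega), ih.2, anchoredFormula_succ_right,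
          if_neg k.succ_ne_zero, add_zero, Nat.add_sub_add_right]
    refine ⟨anchored, fun k => ?_⟩
    by_cases hk : k ≤ n + 1
    · rw [totalCount_succ, anchored k hk, ih.2, show n + 1 + 1 - k = n + 1 - k + 1 by omega,
        totalFormula_succ_left, add_assoc]
    · simp [totalCount_eq_zero (not_le.mp hk), totalFormula, show n + 1 + 1 - k = 0 by omega,
        show k ≠ 0 by omega]

def pathEdge {m : ℕ} (i : Fin m) : Sym2 (Fin (m + 1)) := s(i.castSucc, i.succ)

theorem pathEdge_injective {m : ℕ} : Function.Injective (pathEdge (m := m)) := by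
  intro i j h
  rcases Sym2.eq_iff.mp h with ⟨h, -⟩ | ⟨h₁, h₂⟩
  · exact Fin.castSucc_injective m h
  · simp only [Fin.ext_iff, Fin.val_castSucc, Fin.val_succ] at h₁ h₂
    omega

theorem edgeSet_pathGraph (m : ℕ) : (pathGraph (m + 1)).edgeSet = Set.range pathEdge := by
  ext z
  induction z using Sym2.ind with
  | _ a b =>
    simp only [mem_edgeSet, pathGraph_adj, Set.mem_range, pathEdge, Sym2.eq_iff, Fin.ext_iff,
      Fin.val_castSucc, Fin.val_succ]
    constructor
    · rintro (h | h)
      · exact ⟨⟨a, by omega⟩, Or.inl ⟨rfl, h⟩⟩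
      · exact ⟨⟨b, by omega⟩, Or.inr ⟨rfl, h⟩⟩
    · rintro ⟨i, ⟨h₁, h₂⟩ | ⟨h₁, h₂⟩⟩ <;> omega

theorem edgeSet_subset_range_pathEdge {m : ℕ} (H : (pathGraph (m + 1)).Subgraph) :
    H.edgeSet ⊆ Set.range pathEdge :=
  edgeSet_pathGraph m ▸ H.edgeSet_subset

open Classical in
noncomputable def toConfig {m : ℕ} (H : (pathGraph (m + 1)).Subgraph) :
    (Fin (m + 1) → Bool) × (Fin m → Bool) :=
  (fun i => decide (i ∈ H.verts), fun i => decide (pathEdge i ∈ H.edgeSet))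

def ofConfig {m : ℕ} (v : Fin (m + 1) → Bool) (e : Fin m → Bool) (h : Compatible v e) :
    (pathGraph (m + 1)).Subgraph where
  verts := {i | v i = true}
  Adj a b := ∃ i, e i = true ∧ pathEdge i = s(a, b)
  adj_sub := by
    rintro a b ⟨i, -, hi⟩
    rw [← mem_edgeSet, edgeSet_pathGraph]
    exact ⟨i, hi⟩
  edge_vert := by
    rintro a b ⟨i, hi, hab⟩
    have : a ∈ pathEdge i := hab ▸ Sym2.mem_mk_left a b
    rcases Sym2.mem_iff.mp this with rfl | rfl
    exacts [(h i hi).1, (h i hi).2]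
  symm := ⟨fun a b ⟨i, hi, hab⟩ => ⟨i, hi, hab.trans Sym2.eq_swap⟩⟩

theorem toConfig_ofConfig {m : ℕ} (v : Fin (m + 1) → Bool) (e : Fin m → Bool)
    (h : Compatible v e) : toConfig (ofConfig v e h) = (v, e) := by
  refine Prod.ext (funext fun i => ?_) (funext fun i => ?_)
  · exact Bool.decide_eq_true
  · have hmem : pathEdge i ∈ (ofConfig v e h).edgeSet ↔ ∃ j, e j = true ∧ pathEdge j = pathEdge i :=
      Iff.rfl
    simp only [toConfig, hmem, pathEdge_injective.eq_iff, exists_eq_right, Bool.decide_eq_true]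

theorem toConfig_injective {m : ℕ} : Function.Injective (toConfig (m := m)) := by
  intro H H' h
  simp only [toConfig, Prod.ext_iff, funext_iff, decide_eq_decide] at h
  have hE : H.edgeSet = H'.edgeSet := by
    rw [← Set.image_preimage_eq_of_subset (edgeSet_subset_range_pathEdge H),
      ← Set.image_preimage_eq_of_subset (edgeSet_subset_range_pathEdge H')]
    exact congrArg _ (Set.ext h.2)
  exact Subgraph.ext (Set.ext h.1) (funext₂ fun a b => propext (by
    rw [← Subgraph.mem_edgeSet, hE, Subgraph.mem_edgeSet]))

theorem range_toConfig (m : ℕ) :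
    Set.range (toConfig (m := m)) = {p | Compatible p.1 p.2} := by
  ext p
  constructor
  · rintro ⟨H, rfl⟩ i hi
    simp only [toConfig, decide_eq_true_eq] at hi ⊢
    exact ⟨H.edge_vert hi, H.edge_vert hi.symm⟩
  · exact fun h => ⟨ofConfig p.1 p.2 h, toConfig_ofConfig p.1 p.2 h⟩

theorem edgeSet_ncard_eq {m : ℕ} (H : (pathGraph (m + 1)).Subgraph) :
    H.edgeSet.ncard = edgeCount (toConfig H).2 := by
  rw [edgeCount_eq_ncard, ← Set.ncard_preimage_of_injective_subset_range pathEdge_injective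
    (edgeSet_subset_range_pathEdge H)]
  simp only [toConfig, decide_eq_true_eq]
  rfl

theorem ncard_subgraphs_eq_anchoredCount (m k : ℕ) :
    {H : (pathGraph (m + 1)).Subgraph | Fin.last m ∈ H.verts ∧ H.edgeSet.ncard = k}.ncard =
      anchoredCount m k := by
  have hpre : {H : (pathGraph (m + 1)).Subgraph | Fin.last m ∈ H.verts ∧ H.edgeSet.ncard = k} =
      toConfig ⁻¹' {p | p.1 (Fin.last m) = true ∧ edgeCount p.2 = k} := by
    ext H
    simp [toConfig, edgeSet_ncard_eq]
  rw [hpre, ← Set.ncard_image_of_injective _ toConfig_injective,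
    Set.image_preimage_eq_inter_range, range_toConfig, anchoredCount, ← Set.ncard_coe_finset]
  congr 1
  ext p
  simp [and_comm]

end PathSubgraph

theorem path_subgraph_count (n k : ℕ) (hn : 1 ≤ n) (hk : k ≤ n - 1) :
    Set.ncard {H : (SimpleGraph.pathGraph n).Subgraph |
        (⟨n - 1, by omega⟩ : Fin n) ∈ H.verts ∧ H.edgeSet.ncard = k} =
      ∑ r ∈ Finset.range (n - k), Nat.choose (n - k - 1) r * Nat.choose (r + k) r := by
  obtain ⟨m, rfl⟩ : ∃ m, n = m + 1 := ⟨n - 1, by omega⟩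
  have hlast : (⟨m + 1 - 1, by omega⟩ : Fin (m + 1)) = Fin.last m := Fin.ext (by simp)
  rw [hlast, PathSubgraph.ncard_subgraphs_eq_anchoredCount,
    (PathSubgraph.anchoredCount_eq_and_totalCount_eq m).1 k (by omega),
    PathSubgraph.anchoredFormula, show m + 1 - k = m - k + 1 by omega, Nat.add_sub_cancel]
end

section
/- There is a bijection between properly-marked orientations of the cycle graph C_n and non-empty subgraphs of C_n; under this bijection the number of marked vertices equals the number of edges of the subgraph, and the number of clockwise-directed edges equals the number of vertices of C_n not in the subgraph. -/
/-- The cycle graph on `ZMod n`, edges {i, i+1}. -/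
def cycGraph (m : ℕ) : SimpleGraph (ZMod m) := SimpleGraph.fromRel (fun i j => j = i + 1)

/-- An orientation of the cycle `C_n` is encoded by `f : ZMod n → Bool`, where `f i = true`
means the edge {i, i+1} is directed clockwise (from i to i+1), and `f i = false` means it
is directed counter-clockwise (from i+1 to i). A marked orientation is such an `f` together
with a set `M` of marked vertices. It is properly marked if both edges incident to each
marked vertex are directed counter-clockwise, and at least one edge is counter-clockwise. -/
def ProperlyMarkedOrientation (n : ℕ) (p : (ZMod n → Bool) × Set (ZMod n)) : Prop :=
  (∀ i ∈ p.2, p.1 i = false ∧ p.1 (i - 1) = false) ∧ (∃ i, p.1 i = false)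

/-!
Identify the edge `{i, i+1}` of `C_n` with the vertex `i` of its dual cycle, so that the two
edges at a vertex `i` become the dual vertices `i - 1` and `i`. A subgraph of the cycle is then
the same as a vertex set `V` together with a set `M` of labels `i` with `i - 1, i ∈ V`, the label
`i` standing for the edge `{i - 1, i}`; since `2 ≠ 0` in `ZMod n`, distinct labels give distinct
edges. A properly-marked orientation is exactly such a pair in which `V`, the set of
counter-clockwise edges, is nonempty.
-/

lemma ZMod.two_ne_zero_of_three_le {n : ℕ} (hn : 3 ≤ n) : (2 : ZMod n) ≠ 0 := by
  have hdvd : ¬ n ∣ 2 := fun h => by have := Nat.le_of_dvd two_pos h; omega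
  exact_mod_cast mt (ZMod.natCast_eq_zero_iff 2 n).mp hdvd

open Classical in
noncomputable def boolFunEquivSetOfFalse {α : Type*} : (α → Bool) ≃ Set α where
  toFun f := {a | f a = false}
  invFun s a := decide (a ∉ s)
  left_inv f := by funext a; cases h : f a <;> simp [h]
  right_inv s := by ext a; simp

section CycleSubgraph

variable {n : ℕ}

lemma ZMod.ne_add_one (h2 : (2 : ZMod n) ≠ 0) (i : ZMod n) : i ≠ i + 1 :=
  fun h => h2 (by linear_combination -2 * h)

lemma ZMod.sub_one_ne_add_one (h2 : (2 : ZMod n) ≠ 0) (i : ZMod n) : i - 1 ≠ i + 1 :=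
  fun h => h2 (by linear_combination -h)

lemma ZMod.sym2_sub_one_self_injective (h2 : (2 : ZMod n) ≠ 0) :
    Function.Injective fun i : ZMod n => s(i - 1, i) := by
  intro i j hij
  rcases Sym2.eq_iff.mp hij with ⟨-, h⟩ | ⟨h, h'⟩
  · exact h
  · exact absurd (by linear_combination h - h') (ZMod.sub_one_ne_add_one h2 i)

lemma SimpleGraph.Subgraph.adj_iff_of_cycGraph (H : (cycGraph n).Subgraph) {i j : ZMod n} :
    H.Adj i j ↔ (j = i + 1 ∧ H.Adj (j - 1) j) ∨ (i = j + 1 ∧ H.Adj (i - 1) i) := by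
  constructor
  · intro h
    rcases (SimpleGraph.fromRel_adj _ _ _).mp (H.adj_sub h) |>.2 with rfl | rfl
    · exact .inl ⟨rfl, by simpa using h⟩
    · exact .inr ⟨rfl, by simpa using h.symm⟩
  · rintro (⟨rfl, h⟩ | ⟨rfl, h⟩)
    · simpa using h
    · simpa using h.symm

variable (h2 : (2 : ZMod n) ≠ 0)

def cycSubgraph (V M : Set (ZMod n)) (hM : ∀ i ∈ M, i - 1 ∈ V ∧ i ∈ V) :
    (cycGraph n).Subgraph where
  verts := V
  Adj i j := (j = i + 1 ∧ j ∈ M) ∨ (i = j + 1 ∧ i ∈ M)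
  adj_sub := by
    rintro i j (⟨rfl, -⟩ | ⟨rfl, -⟩)
    · exact (SimpleGraph.fromRel_adj _ _ _).mpr ⟨ZMod.ne_add_one h2 i, .inl rfl⟩
    · exact (SimpleGraph.fromRel_adj _ _ _).mpr ⟨(ZMod.ne_add_one h2 j).symm, .inr rfl⟩
  edge_vert := by
    rintro i j (⟨rfl, hj⟩ | ⟨rfl, hi⟩)
    · simpa using (hM _ hj).1
    · exact (hM _ hi).2
  symm := ⟨fun _ _ => Or.symm⟩

variable {V M : Set (ZMod n)} {hM : ∀ i ∈ M, i - 1 ∈ V ∧ i ∈ V}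

@[simp]
lemma verts_cycSubgraph : (cycSubgraph h2 V M hM).verts = V := rfl

lemma cycSubgraph_adj_sub_one_iff (i : ZMod n) :
    (cycSubgraph h2 V M hM).Adj (i - 1) i ↔ i ∈ M := by
  simp [cycSubgraph, ZMod.sub_one_ne_add_one h2 i]

lemma edgeSet_cycSubgraph : (cycSubgraph h2 V M hM).edgeSet = (fun i => s(i - 1, i)) '' M := by
  ext e
  induction e using Sym2.ind with
  | _ i j =>
    simp only [SimpleGraph.Subgraph.mem_edgeSet, cycSubgraph, Set.mem_image, Sym2.eq_iff]
    constructor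
    · rintro (⟨rfl, hj⟩ | ⟨rfl, hi⟩)
      · exact ⟨i + 1, hj, .inl ⟨by ring, rfl⟩⟩
      · exact ⟨j + 1, hi, .inr ⟨by ring, rfl⟩⟩
    · rintro ⟨k, hk, ⟨rfl, rfl⟩ | ⟨rfl, rfl⟩⟩
      · exact .inl ⟨by ring, hk⟩
      · exact .inr ⟨by ring, hk⟩

lemma ncard_edgeSet_cycSubgraph : (cycSubgraph h2 V M hM).edgeSet.ncard = M.ncard := by
  rw [edgeSet_cycSubgraph, Set.ncard_image_of_injective _ (ZMod.sym2_sub_one_self_injective h2)]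

def cycSubgraphEquiv : (cycGraph n).Subgraph ≃
    {p : Set (ZMod n) × Set (ZMod n) // ∀ i ∈ p.2, i - 1 ∈ p.1 ∧ i ∈ p.1} where
  toFun H :=
    ⟨(H.verts, {i | H.Adj (i - 1) i}), fun _ hi => ⟨H.edge_vert hi, H.edge_vert hi.symm⟩⟩
  invFun p := cycSubgraph h2 p.1.1 p.1.2 p.2
  left_inv H := by
    ext i j
    · rfl
    · exact (H.adj_iff_of_cycGraph).symm
  right_inv p := Subtype.ext <| Prod.ext rfl <|
    Set.ext fun i => cycSubgraph_adj_sub_one_iff h2 (hM := p.2) i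

end CycleSubgraph

lemma properlyMarkedOrientation_iff {n : ℕ} (p : (ZMod n → Bool) × Set (ZMod n)) :
    ProperlyMarkedOrientation n p ↔
      (∀ i ∈ p.2, i - 1 ∈ boolFunEquivSetOfFalse p.1 ∧ i ∈ boolFunEquivSetOfFalse p.1) ∧
        (boolFunEquivSetOfFalse p.1).Nonempty :=
  and_congr (forall₂_congr fun _ _ => and_comm) Iff.rfl

theorem pmo_equiv_subgraphs (n : ℕ) (hn : 3 ≤ n) :
    ∃ e : {p : (ZMod n → Bool) × Set (ZMod n) // ProperlyMarkedOrientation n p} ≃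
        {H : (cycGraph n).Subgraph // H.verts.Nonempty},
      ∀ p, p.1.2.ncard = (e p).1.edgeSet.ncard ∧
        {i | p.1.1 i = true}.ncard = ((e p).1.verts)ᶜ.ncard := by
  have h2 := ZMod.two_ne_zero_of_three_le hn
  let e := (Equiv.subtypeEquiv (boolFunEquivSetOfFalse.prodCongr (Equiv.refl _))
      properlyMarkedOrientation_iff).trans <|
    (Equiv.subtypeSubtypeEquivSubtypeInter _ fun q => q.1.Nonempty).symm.trans <|
    Equiv.subtypeEquiv (q := fun H => H.verts.Nonempty) (cycSubgraphEquiv h2).symm fun _ => Iff.rfl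
  refine ⟨e, fun ⟨⟨f, M⟩, hp⟩ => ?_⟩
  have he : (e ⟨(f, M), hp⟩).1 =
      cycSubgraph h2 {i | f i = false} M fun i hi => (hp.1 i hi).symm := rfl
  rw [he, ncard_edgeSet_cycSubgraph, verts_cycSubgraph]
  exact ⟨rfl, congrArg Set.ncard (by ext; simp)⟩
end

section
/- A stable configuration c ∈ {0,1,2}^n on the wheel graph W_n (with c viewed as grains on the cycle vertices 1,...,n) admits a compatible orientation of the cycle C_n (i.e., an orientation O with c_i ≥ indeg_O(i) for all i) if and only if c satisfies the 02-cycle condition: for all i, j with c_i = c_j = 0, there exists k strictly between i and j cyclically (with (i,i) interpreted as all other vertices) such that c_k = 2. -/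
/- An orientation of the cycle `C_n` (vertices `ZMod n`, edges {i, i+1}) is encoded by
`f : ZMod n → Bool`: `f i = true` means the edge {i, i+1} is directed clockwise, from `i`
to `i+1`; `f i = false` means it is directed counter-clockwise, from `i+1` to `i`. -/

/-- The in-degree of vertex `i` in the orientation `f` of the cycle `C_n`: the edge
{i-1, i} points into `i` when clockwise, and the edge {i, i+1} points into `i` when
counter-clockwise. -/
def indeg (n : ℕ) (f : ZMod n → Bool) (i : ZMod n) : ℕ :=
  (if f (i - 1) = true then 1 else 0) + (if f i = false then 1 else 0)

/-- `k` lies strictly between `i` and `j` in the clockwise cyclic order on `ZMod n`;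
when `i = j`, the open interval `(i, i)` is all vertices other than `i`. -/
def CyclicBetween (n : ℕ) (i j k : ZMod n) : Prop :=
  ∃ a : ℕ, 0 < a ∧ a < (if i = j then n else (j - i).val) ∧ k = i + (a : ZMod n)

/-- The 02-cycle condition: between any two vertices with no grains there is a vertex
with two grains. -/
def ZeroTwoCond (n : ℕ) (c : ZMod n → ℕ) : Prop :=
  ∀ i j, c i = 0 → c j = 0 → ∃ k, CyclicBetween n i j k ∧ c k = 2

theorem ssm_rec_wheel_iff (n : ℕ) (hn : 3 ≤ n) (c : ZMod n → ℕ) (hst : ∀ i, c i ≤ 2) :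
    (∃ f : ZMod n → Bool, ∀ i, indeg n f i ≤ c i) ↔ ZeroTwoCond n c := by
  have hnz : NeZero n := ⟨by omega⟩
  constructor
  · rintro ⟨f, hf⟩ i j hi hj
    by_contra hno
    push_neg at hno
    -- zeros force orientation
    have h0 : ∀ v, c v = 0 → f (v - 1) = false ∧ f v = true := by
      intro v hv
      have := hf v
      rw [indeg, hv] at this
      constructor
      · by_contra h; simp at h; rw [h] at this; simp at this
      · by_contra h; simp at h; rw [h] at this; simp at this
    set d := if i = j then n else (j - i).val with hd
    have hd1 : 1 ≤ d := by
      rw [hd]; split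
      · omega
      · next h => exact ZMod.val_pos.mpr (sub_ne_zero.mpr (Ne.symm h))
    have key : ∀ a, a < d → f (i + (a : ZMod n)) = true := by
      intro a
      induction a with
      | zero => intro _; simpa using (h0 i hi).2
      | succ a ih =>
        intro hlt
        have ha := ih (by omega)
        have hc : c (i + ((a+1 : ℕ) : ZMod n)) ≤ 1 := by
          have h2 := hno (i + ((a+1 : ℕ) : ZMod n)) ⟨a+1, by omega, hlt, rfl⟩
          have := hst (i + ((a+1 : ℕ) : ZMod n))
          omega
        have hv := hf (i + ((a+1 : ℕ) : ZMod n))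
        rw [indeg] at hv
        have hsub : i + ((a+1 : ℕ) : ZMod n) - 1 = i + (a : ZMod n) := by
          push_cast; ring
        rw [hsub, ha] at hv
        by_contra h
        rw [Bool.not_eq_true] at h
        rw [h, if_pos rfl, if_pos rfl] at hv; omega
    have hlast := key (d - 1) (by omega)
    have hjm : i + ((d - 1 : ℕ) : ZMod n) = j - 1 := by
      rw [Nat.cast_sub hd1]
      rw [hd]; split
      · next h => subst h; rw [ZMod.natCast_self]; ring
      · next h => rw [ZMod.natCast_val, ZMod.cast_id]; ring
    rw [hjm] at hlast
    rw [(h0 j hj).1] at hlast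
    exact Bool.false_ne_true hlast
  · intro h02
    by_cases hez : ∃ z, c z = 0
    · obtain ⟨z, hz⟩ := hez
      classical
      have ex : ∀ i : ZMod n, ∃ a : ℕ, 0 < a ∧ c (i + (a : ZMod n)) = 0 := by
        intro i
        refine ⟨(z - i).val + n, by omega, ?_⟩
        have : (((z - i).val + n : ℕ) : ZMod n) = z - i := by
          push_cast
          simp [ZMod.natCast_self, ZMod.natCast_val, ZMod.cast_id]
        rw [this]; simpa using hz
      set N : ZMod n → ℕ := fun i => Nat.find (ex i) with hN
      set f : ZMod n → Bool := fun i => decide (∃ b : ℕ, 0 < b ∧ b < N i ∧ c (i + (b : ZMod n)) = 2) with hfdef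
      have hN0 : ∀ i, 0 < N i := fun i => (Nat.find_spec (ex i)).1
      have hNz : ∀ i, c (i + ((N i : ℕ) : ZMod n)) = 0 := fun i => (Nat.find_spec (ex i)).2
      have hNmin : ∀ i a, 0 < a → a < N i → c (i + (a : ZMod n)) ≠ 0 := by
        intro i a ha hlt h
        exact Nat.find_min (ex i) hlt ⟨ha, h⟩
      have hnext0 : ∀ i : ZMod n, c (i + 1) = 0 → N i = 1 := by
        intro i h
        have h1 : N i ≤ 1 := Nat.find_min' (ex i) ⟨one_pos, by simpa using h⟩
        have := hN0 i; omega
      have hf_false : ∀ i : ZMod n, c (i + 1) = 0 → f i = false := by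
        intro i h
        rw [hfdef]; simp only [decide_eq_false_iff_not]
        rintro ⟨b, hb0, hbN, _⟩
        rw [hnext0 i h] at hbN; omega
      have hstep : ∀ i : ZMod n, c (i + 1) ≠ 0 → N i = N (i + 1) + 1 := by
        intro i h
        have hub : N i ≤ N (i + 1) + 1 := by
          apply Nat.find_min' (ex i)
          refine ⟨by omega, ?_⟩
          have : ((N (i+1) + 1 : ℕ) : ZMod n) = 1 + ((N (i+1) : ℕ) : ZMod n) := by push_cast; ring
          rw [this, ← add_assoc]
          exact hNz (i + 1)
        have h2 : 2 ≤ N i := by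
          rcases Nat.lt_or_ge (N i) 2 with h'|h'
          · exfalso
            have h1 : N i = 1 := by have := hN0 i; omega
            apply h
            have := hNz i
            rw [h1] at this; simpa using this
          · exact h'
        have hlb : N (i + 1) ≤ N i - 1 := by
          apply Nat.find_min' (ex (i+1))
          refine ⟨by omega, ?_⟩
          have : (i + 1) + ((N i - 1 : ℕ) : ZMod n) = i + ((N i : ℕ) : ZMod n) := by
            rw [Nat.cast_sub (by omega)]; ring
          rw [this]
          exact hNz i
        omega
      have hdesc : ∀ i : ZMod n, c (i + 1) ≠ 0 → f i = true → f (i + 1) = false → c (i + 1) = 2 := by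
        intro i h hft hff
        rw [hfdef] at hft hff
        simp only [decide_eq_true_eq, decide_eq_false_iff_not] at hft hff
        obtain ⟨b, hb0, hbN, hb2⟩ := hft
        rw [hstep i h] at hbN
        rcases Nat.lt_or_ge b 2 with hb|hb
        · have : b = 1 := by omega
          subst this; simpa using hb2
        · exfalso
          apply hff
          refine ⟨b - 1, by omega, by omega, ?_⟩
          have : (i + 1) + ((b - 1 : ℕ) : ZMod n) = i + (b : ZMod n) := by
            rw [Nat.cast_sub (by omega)]; ring
          rw [this]; exact hb2
      have hNle : ∀ w : ZMod n, c w = 0 → N w ≤ n := by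
        intro w hw
        apply Nat.find_min' (ex w)
        refine ⟨by omega, ?_⟩
        simp [ZMod.natCast_self, hw]
      have hfzero : ∀ w : ZMod n, c w = 0 → f w = true := by
        intro w hw
        rw [hfdef]; simp only [decide_eq_true_eq]
        by_cases hww : (((N w : ℕ)) : ZMod n) = 0
        · -- N w = n, only-zero wrap case
          have hNn : N w = n := by
            have hdvd : n ∣ N w := (ZMod.natCast_eq_zero_iff _ _).mp hww
            have := hN0 w
            have := hNle w hw
            have := Nat.le_of_dvd (hN0 w) hdvd
            omega
          obtain ⟨k, ⟨a, ha0, haL, hak⟩, hk2⟩ := h02 w w hw hw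
          rw [if_pos rfl] at haL
          exact ⟨a, ha0, by omega, by rw [← hak]; exact hk2⟩
        · have hw' : c (w + ((N w : ℕ) : ZMod n)) = 0 := hNz w
          have hne : w ≠ w + ((N w : ℕ) : ZMod n) := by
            intro h; apply hww
            have := h.symm
            rwa [add_eq_left] at this
          obtain ⟨k, ⟨a, ha0, haL, hak⟩, hk2⟩ := h02 w (w + ((N w : ℕ) : ZMod n)) hw hw'
          rw [if_neg hne] at haL
          have hval : (w + ((N w : ℕ) : ZMod n) - w).val = N w := by
            have h1 : w + ((N w : ℕ) : ZMod n) - w = ((N w : ℕ) : ZMod n) := by ring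
            rw [h1]
            apply ZMod.val_cast_of_lt
            have hle := hNle w hw
            rcases Nat.lt_or_ge (N w) n with h'|h'
            · exact h'
            · exfalso; apply hww
              have : N w = n := by omega
              rw [this]; simp [ZMod.natCast_self]
          rw [hval] at haL
          exact ⟨a, ha0, haL, by rw [← hak]; exact hk2⟩
      refine ⟨f, fun i => ?_⟩
      rw [indeg]
      rcases Nat.lt_or_ge (c i) 1 with h0|h0
      · have hci : c i = 0 := by omega
        have h1 : f (i - 1) = false := by
          apply hf_false
          simpa using hci
        have h2 : f i = true := hfzero i hci
        rw [h1, h2]; simp [hci]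
      · rcases Nat.lt_or_ge (c i) 2 with h1|h1
        · -- c i = 1
          have hci : c i = 1 := by omega
          by_cases ha : f (i - 1) = true
          · by_cases hb : f i = false
            · exfalso
              have hcne : c ((i - 1) + 1) ≠ 0 := by simpa using (by omega : c i ≠ 0)
              have := hdesc (i - 1) hcne ha (by simpa using hb)
              simp at this
              omega
            · simp at hb; rw [ha, hb]; simp; omega
          · simp at ha; rw [ha]; simp; split <;> omega
        · split <;> split <;> omega
    · push_neg at hez
      refine ⟨fun _ => true, fun i => ?_⟩
      rw [indeg]; simp
      have := hez i; omega
end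

section
/- A stable configuration c ∈ {0,1,2}^n on the cycle vertices admits a compatible acyclic orientation of C_n if and only if it satisfies the 02-cycle condition and moreover there exists some i with c_i = 2. -/
/-- The directed step relation of the orientation `f` of the cycle. -/
def stepRel (n : ℕ) (f : ZMod n → Bool) (u v : ZMod n) : Prop :=
  (f u = true ∧ v = u + 1) ∨ (f v = false ∧ u = v + 1)

/-- An orientation is acyclic if it has no directed cycle. -/
def AcyclicOrientation (n : ℕ) (f : ZMod n → Bool) : Prop :=
  ∀ v, ¬ Relation.TransGen (stepRel n f) v v

theorem acyclic_of_flip (n : ℕ) (hn : 2 ≤ n) (f : ZMod n → Bool) (s : ZMod n)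
    (hs1 : f (s - 1) = true) (hs2 : f s = false) : AcyclicOrientation n f := by
  haveI : NeZero n := ⟨by omega⟩
  haveI : Fact (1 < n) := ⟨by omega⟩
  have hval_cast : ∀ a : ZMod n, ((a.val : ℕ) : ZMod n) = a := fun a => by
    simp [ZMod.natCast_val, ZMod.cast_id]
  set h : ZMod n → ℕ := fun v =>
    if v = s then n else
      ∑ p ∈ Finset.range n,
        (if p < (v - s).val then (if f (s + (p : ZMod n)) = true then 1 else 0)
         else (if f (s + (p : ZMod n)) = false then 1 else 0)) with hh
  have hhs : h s = n := by simp [hh]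
  have hbound : ∀ v, v ≠ s → h v < n := by
    intro v hv
    have hpos : 0 < (v - s).val := by
      rcases Nat.eq_zero_or_pos (v - s).val with h0 | h0
      · exact absurd (sub_eq_zero.mp ((ZMod.val_eq_zero _).mp h0)) hv
      · exact h0
    have h0mem : (0:ℕ) ∈ Finset.range n := Finset.mem_range.mpr (by omega)
    have hdec : h v = (if (0:ℕ) < (v - s).val then (if f (s + ((0:ℕ) : ZMod n)) = true then 1 else 0)
         else (if f (s + ((0:ℕ):ZMod n)) = false then 1 else 0)) +
        ∑ p ∈ (Finset.range n).erase 0,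
        (if p < (v - s).val then (if f (s + (p : ZMod n)) = true then 1 else 0)
         else (if f (s + (p : ZMod n)) = false then 1 else 0)) := by
      rw [hh]; simp only [if_neg hv]
      exact (Finset.add_sum_erase _ _ h0mem).symm
    have hterm0 : (if (0:ℕ) < (v - s).val then (if f (s + ((0:ℕ) : ZMod n)) = true then 1 else 0)
         else (if f (s + ((0:ℕ):ZMod n)) = false then 1 else 0)) = 0 := by
      simp only [Nat.cast_zero, add_zero, if_pos hpos, hs2]
      simp
    have hsum : ∑ p ∈ (Finset.range n).erase 0,
        (if p < (v - s).val then (if f (s + (p : ZMod n)) = true then 1 else 0)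
         else (if f (s + (p : ZMod n)) = false then 1 else 0)) ≤ n - 1 := by
      have := Finset.sum_le_card_nsmul ((Finset.range n).erase 0)
        (fun p => (if p < (v - s).val then (if f (s + (p : ZMod n)) = true then 1 else 0)
         else (if f (s + (p : ZMod n)) = false then 1 else 0))) 1
        (by intro x _; split_ifs <;> omega)
      simpa [Finset.card_erase_of_mem h0mem] using this
    omega
  have hkey : ∀ u, u ≠ s → u + 1 ≠ s →
      (f u = true → h (u + 1) = h u + 1) ∧ (f u = false → h u = h (u + 1) + 1) := by
    intro u hu hu1
    set p₀ := (u - s).val with hp₀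
    have hp₀n : p₀ < n := ZMod.val_lt _
    have hsu : s + (p₀ : ZMod n) = u := by rw [hp₀, hval_cast]; ring
    have hvalsucc : (u + 1 - s).val = p₀ + 1 := by
      have h1 : u + 1 - s = (u - s) + 1 := by ring
      have hne : p₀ + 1 ≠ n := by
        intro hEq
        apply hu1
        have : ((p₀ + 1 : ℕ) : ZMod n) = 0 := by rw [hEq]; exact_mod_cast ZMod.natCast_self n
        have h2 : (u - s) + 1 = 0 := by
          rw [← hval_cast (u - s), ← hp₀]; push_cast at this ⊢; linear_combination this
        rw [← sub_eq_zero, h1]; exact h2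
      rw [h1, ZMod.val_add_of_lt]
      · rw [ZMod.val_one, ← hp₀]
      · rw [ZMod.val_one, ← hp₀]; omega
    have hp₀mem : p₀ ∈ Finset.range n := Finset.mem_range.mpr hp₀n
    set S := ∑ p ∈ (Finset.range n).erase p₀,
        (if p < p₀ then (if f (s + (p : ZMod n)) = true then 1 else 0)
         else (if f (s + (p : ZMod n)) = false then 1 else 0)) with hS
    have hu_eq : h u = (if f u = false then 1 else 0) + S := by
      rw [hh]; simp only [if_neg hu]
      rw [← Finset.add_sum_erase _ _ hp₀mem]
      congr 1
      rw [← hp₀, if_neg (lt_irrefl p₀), hsu]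
    have hu1_eq : h (u + 1) = (if f u = true then 1 else 0) + S := by
      rw [hh]; simp only [if_neg hu1]
      rw [← Finset.add_sum_erase _ _ hp₀mem, hvalsucc]
      congr 1
      · rw [if_pos (by omega : p₀ < p₀ + 1), hsu]
      · apply Finset.sum_congr rfl
        intro p hp
        have hpne : p ≠ p₀ := Finset.ne_of_mem_erase hp
        have : p < p₀ + 1 ↔ p < p₀ := by omega
        rw [if_congr this rfl rfl]
    constructor
    · intro hft; rw [hu_eq, hu1_eq, hft]; simp [Nat.add_comm]
    · intro hff; rw [hu_eq, hu1_eq, hff]; simp [Nat.add_comm]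
  have hone_ne : (1 : ZMod n) ≠ 0 := by
    intro hEq
    have h1 := ZMod.val_one n
    rw [hEq, ZMod.val_zero] at h1
    exact absurd h1 (by omega)
  have hstep : ∀ u v, stepRel n f u v → h u < h v := by
    intro u v huv
    rcases huv with ⟨hft, rfl⟩ | ⟨hfv, rfl⟩
    · have hu : u ≠ s := by rintro rfl; rw [hs2] at hft; cases hft
      by_cases hu1 : u + 1 = s
      · rw [hu1, hhs]; exact hbound u hu
      · have := (hkey u hu hu1).1 hft; omega
    · by_cases hvs : v = s
      · subst hvs
        have hvs1 : v + 1 ≠ v := by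
          intro hEq
          exact hone_ne (by linear_combination hEq)
        rw [hhs]; exact hbound _ hvs1
      · have hvs1 : v + 1 ≠ s := by
          intro hEq
          have hveq : v = s - 1 := by linear_combination hEq
          rw [hveq, hs1] at hfv; cases hfv
        have := (hkey v hvs hvs1).2 hfv; omega
  intro v htg
  have hmono : ∀ a b, Relation.TransGen (stepRel n f) a b → h a < h b := by
    intro a b hab
    induction hab with
    | single h1 => exact hstep _ _ h1
    | tail _ h1 ih => exact ih.trans (hstep _ _ h1)
  exact absurd (hmono v v htg) (lt_irrefl _)

theorem exists_flip (n : ℕ) (hn : 1 ≤ n) (f : ZMod n → Bool)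
    (hac : AcyclicOrientation n f) : ∃ s, f (s - 1) = true ∧ f s = false := by
  by_contra hcon
  push_neg at hcon
  have hstepup : ∀ s : ZMod n, f (s - 1) = true → f s = true := by
    intro s h1
    have := hcon s h1
    simpa using this
  by_cases hT : ∃ t, f t = true
  · obtain ⟨t, ht⟩ := hT
    have hall : ∀ k : ℕ, f (t + (k : ZMod n)) = true := by
      intro k
      induction k with
      | zero => simpa using ht
      | succ k ih =>
        apply hstepup (t + ((k + 1 : ℕ) : ZMod n))
        have heq : t + ((k + 1 : ℕ) : ZMod n) - 1 = t + (k : ZMod n) := by push_cast; ring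
        rw [heq]; exact ih
    have hcyc : ∀ k : ℕ, Relation.TransGen (stepRel n f) t (t + ((k + 1 : ℕ) : ZMod n)) := by
      intro k
      induction k with
      | zero => exact Relation.TransGen.single (Or.inl ⟨ht, by push_cast; ring⟩)
      | succ k ih =>
        exact Relation.TransGen.tail ih (Or.inl ⟨hall (k + 1), by push_cast; ring⟩)
    have hfin := hcyc (n - 1)
    rw [show ((n - 1 + 1 : ℕ) : ZMod n) = 0 by
      rw [Nat.sub_add_cancel hn]; exact ZMod.natCast_self n, add_zero] at hfin
    exact hac t hfin
  · push_neg at hT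
    have hallF : ∀ t, f t = false := by intro t; have := hT t; simpa using this
    have hcyc : ∀ k : ℕ, Relation.TransGen (stepRel n f) ((0 : ZMod n) + ((k + 1 : ℕ) : ZMod n)) 0 := by
      intro k
      induction k with
      | zero => exact Relation.TransGen.single (Or.inr ⟨hallF 0, by push_cast; ring⟩)
      | succ k ih =>
        exact Relation.TransGen.head (Or.inr ⟨hallF _, by push_cast; ring⟩) ih
    have hfin := hcyc (n - 1)
    rw [show ((n - 1 + 1 : ℕ) : ZMod n) = 0 by
      rw [Nat.sub_add_cancel hn]; exact ZMod.natCast_self n, add_zero] at hfin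
    exact hac 0 hfin

theorem forward_dir (n : ℕ) (hn : 3 ≤ n) (c : ZMod n → ℕ) (hst : ∀ i, c i ≤ 2)
    (f : ZMod n → Bool) (hcomp : ∀ i, indeg n f i ≤ c i)
    (s : ZMod n) (hs1 : f (s - 1) = true) (hs2 : f s = false) :
    ZeroTwoCond n c ∧ ∃ i, c i = 2 := by
  haveI : NeZero n := ⟨by omega⟩
  have hval_cast : ∀ a : ZMod n, ((a.val : ℕ) : ZMod n) = a := fun a => by
    simp [ZMod.natCast_val, ZMod.cast_id]
  have hcs : c s = 2 := by
    have h := hcomp s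
    rw [indeg, hs1, hs2] at h
    simp at h
    have := hst s
    omega
  refine ⟨?_, s, hcs⟩
  intro i j hi hj
  have hsource : ∀ x : ZMod n, c x = 0 → f (x - 1) = false ∧ f x = true := by
    intro x hx
    have h := hcomp x
    rw [indeg, hx] at h
    constructor
    · cases hb : f (x - 1)
      · rfl
      · rw [hb] at h; simp at h
    · cases hb : f x
      · rw [hb] at h; simp at h
      · rfl
  obtain ⟨hi1, hi2⟩ := hsource i hi
  obtain ⟨hj1, hj2⟩ := hsource j hj
  set m : ℕ := if i = j then n else (j - i).val with hm
  have hm1 : 1 ≤ m := by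
    rw [hm]; split
    · omega
    · rename_i hij
      have h0 : j - i ≠ 0 := by
        intro h0
        exact hij (sub_eq_zero.mp h0).symm
      have := (ZMod.val_eq_zero (j - i)).not.mpr h0
      omega
  have hwit : f (i + ((m - 1 : ℕ) : ZMod n)) = false := by
    rw [hm]; split
    · rename_i hij
      have : ((n - 1 : ℕ) : ZMod n) = -1 := by
        rw [Nat.cast_sub (by omega : 1 ≤ n), ZMod.natCast_self]; ring
      rw [this]
      have : i + (-1) = i - 1 := by ring
      rw [this, hi1]
    · rename_i hij
      have hval : (j - i).val ≠ 0 := by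
        intro h0
        exact hij (sub_eq_zero.mp ((ZMod.val_eq_zero _).mp h0)).symm
      have : (((j - i).val - 1 : ℕ) : ZMod n) = (j - i) - 1 := by
        rw [Nat.cast_sub (by omega), hval_cast, Nat.cast_one]
      rw [this, show i + (j - i - 1) = j - 1 by ring, hj1]
  have hP : ∃ a : ℕ, f (i + (a : ZMod n)) = false := ⟨m - 1, hwit⟩
  set a₀ := Nat.find hP with ha₀
  have hfind : f (i + ((a₀ : ℕ) : ZMod n)) = false := Nat.find_spec hP
  have ha₀le : a₀ ≤ m - 1 := Nat.find_le hwit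
  have ha₀pos : 0 < a₀ := by
    rcases Nat.eq_zero_or_pos a₀ with h0 | h0
    · exfalso
      rw [h0] at hfind
      simp at hfind
      rw [hfind] at hi2
      cases hi2
    · exact h0
  have hprev : f (i + ((a₀ - 1 : ℕ) : ZMod n)) = true := by
    have := Nat.find_min hP (show a₀ - 1 < a₀ by omega)
    simpa using this
  refine ⟨i + ((a₀ : ℕ) : ZMod n), ⟨a₀, ha₀pos, by rw [← hm]; omega, rfl⟩, ?_⟩
  have hk1 : i + ((a₀ : ℕ) : ZMod n) - 1 = i + ((a₀ - 1 : ℕ) : ZMod n) := by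
    rw [Nat.cast_sub (by omega : 1 ≤ a₀), Nat.cast_one]; ring
  have h := hcomp (i + ((a₀ : ℕ) : ZMod n))
  rw [indeg, hk1, hprev, hfind] at h
  simp at h
  have := hst (i + ((a₀ : ℕ) : ZMod n))
  omega

theorem backward_dir (n : ℕ) (hn : 3 ≤ n) (c : ZMod n → ℕ) (hst : ∀ i, c i ≤ 2)
    (hzt : ZeroTwoCond n c) (i₀ : ZMod n) (hi₀ : c i₀ = 2) :
    ∃ f : ZMod n → Bool, (∀ i, indeg n f i ≤ c i) ∧
      f (i₀ - 1) = true ∧ f i₀ = false := by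
  haveI : NeZero n := ⟨by omega⟩
  haveI : Fact (1 < n) := ⟨by omega⟩
  have hval_cast : ∀ a : ZMod n, ((a.val : ℕ) : ZMod n) = a := fun a => by
    simp [ZMod.natCast_val, ZMod.cast_id]
  have hex : ∀ j : ZMod n, ∃ a : ℕ, c (j + (a : ZMod n)) ≠ 1 := by
    intro j
    refine ⟨(i₀ - j).val, ?_⟩
    rw [hval_cast, show j + (i₀ - j) = i₀ by ring, hi₀]
    omega
  classical
  set d : ZMod n → ℕ := fun j => Nat.find (hex j) with hd
  set g : ZMod n → Bool := fun j => decide (c (j + ((d j : ℕ) : ZMod n)) = 2) with hg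
  set f : ZMod n → Bool := fun i => if i = i₀ then false else g (i + 1) with hf
  have hd_spec : ∀ j, c (j + ((d j : ℕ) : ZMod n)) ≠ 1 := fun j => Nat.find_spec (hex j)
  have hd_min : ∀ j, ∀ a < d j, c (j + (a : ZMod n)) = 1 := by
    intro j a ha
    have := Nat.find_min (hex j) ha
    simpa using this
  have hd_le : ∀ j, d j ≤ (i₀ - j).val := by
    intro j
    apply Nat.find_le
    rw [hval_cast, show j + (i₀ - j) = i₀ by ring, hi₀]
    omega
  have hd_lt : ∀ j, d j < n := fun j => lt_of_le_of_lt (hd_le j) (ZMod.val_lt _)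
  -- d and g at a zero vertex
  have hd_zero : ∀ j, c j = 0 → d j = 0 := by
    intro j hj
    have : d j ≤ 0 := Nat.find_le (by rw [Nat.cast_zero, add_zero, hj]; omega)
    omega
  have hg_zero : ∀ j, c j = 0 → g j = false := by
    intro j hj
    rw [hg]
    simp only
    rw [hd_zero j hj, Nat.cast_zero, add_zero, hj]
    simp
  -- g after a zero vertex is true
  have hg_after_zero : ∀ j, c j = 0 → g (j + 1) = true := by
    intro j hj
    set a := d (j + 1) with ha
    have hck : c (j + 1 + ((a : ℕ) : ZMod n)) ≠ 1 := hd_spec (j + 1)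
    by_cases hck2 : c (j + 1 + ((a : ℕ) : ZMod n)) = 2
    · rw [hg]; simp only; rw [← ha]; simpa using hck2
    exfalso
    have hck0 : c (j + 1 + ((a : ℕ) : ZMod n)) = 0 := by
      have := hst (j + 1 + ((a : ℕ) : ZMod n)); omega
    obtain ⟨k', ⟨b, hb0, hbm, hk'⟩, hck'⟩ := hzt j (j + 1 + ((a : ℕ) : ZMod n)) hj hck0
    have ha_lt : a < n := hd_lt (j + 1)
    -- k' = j + b with c k' = 2; show b - 1 < a to contradict minimality
    have hblt : b - 1 < a := by
      by_cases hjk : j = j + 1 + ((a : ℕ) : ZMod n)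
      · -- then n ∣ 1 + a, so a = n - 1
        rw [if_pos hjk] at hbm
        have : ((1 + a : ℕ) : ZMod n) = 0 := by
          push_cast
          linear_combination - hjk
        have hdvd : n ∣ 1 + a := (ZMod.natCast_eq_zero_iff _ _).mp this
        have : 1 + a = n := by
          rcases hdvd with ⟨t, ht⟩
          rcases t with _ | t
          · omega
          · rcases t with _ | t
            · omega
            · exfalso; nlinarith
        omega
      · rw [if_neg hjk] at hbm
        have : (j + 1 + ((a : ℕ) : ZMod n) - j) = ((1 + a : ℕ) : ZMod n) := by
          push_cast; ring
        rw [this, ZMod.val_natCast] at hbm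
        have : (1 + a) % n ≤ 1 + a := Nat.mod_le _ _
        omega
    have := hd_min (j + 1) (b - 1) hblt
    rw [show j + 1 + (((b - 1 : ℕ)) : ZMod n) = j + (b : ZMod n) by
      rw [Nat.cast_sub (by omega : 1 ≤ b), Nat.cast_one]; ring] at this
    rw [← hk'] at this
    omega
  -- at a one vertex, g i = g (i+1)
  have hg_one : ∀ j, c j = 1 → g j = g (j + 1) := by
    intro j hj
    have h1 : 1 ≤ d j := by
      rcases Nat.eq_zero_or_pos (d j) with h0 | h0
      · exfalso; have := hd_spec j; rw [h0] at this; simp [hj] at this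
      · exact h0
    have hA : d (j + 1) ≤ d j - 1 := by
      apply Nat.find_le
      rw [show j + 1 + (((d j - 1 : ℕ)) : ZMod n) = j + ((d j : ℕ) : ZMod n) by
        rw [Nat.cast_sub (by omega : 1 ≤ d j), Nat.cast_one]; ring]
      exact hd_spec j
    have hB : d j ≤ d (j + 1) + 1 := by
      apply Nat.find_le
      rw [show j + (((d (j + 1) + 1 : ℕ)) : ZMod n) = j + 1 + ((d (j + 1) : ℕ) : ZMod n) by
        push_cast; ring]
      exact hd_spec (j + 1)
    have hdd : d (j + 1) = d j - 1 := by omega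
    rw [hg]
    simp only
    rw [hdd]
    rw [show j + 1 + (((d j - 1 : ℕ)) : ZMod n) = j + ((d j : ℕ) : ZMod n) by
      rw [Nat.cast_sub (by omega : 1 ≤ d j), Nat.cast_one]; ring]
  -- f at i₀
  have hone_ne : (1 : ZMod n) ≠ 0 := by
    intro hEq
    have h1 := ZMod.val_one n
    rw [hEq, ZMod.val_zero] at h1
    exact absurd h1 (by omega)
  have hfi₀ : f i₀ = false := by rw [hf]; simp
  have hfi₀1 : f (i₀ - 1) = true := by
    rw [hf]
    simp only
    rw [if_neg (by
      intro hEq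
      apply hone_ne
      have : i₀ - 1 - i₀ = 0 := by rw [hEq]; ring
      linear_combination - this)]
    rw [show i₀ - 1 + 1 = i₀ by ring]
    rw [hg]
    simp only
    have hd0 : d i₀ = 0 := by
      have : d i₀ ≤ 0 := Nat.find_le (by rw [Nat.cast_zero, add_zero, hi₀]; omega)
      omega
    rw [hd0, Nat.cast_zero, add_zero, hi₀]
    simp
  refine ⟨f, ?_, hfi₀1, hfi₀⟩
  intro i
  have hi2 := hst i
  rcases (show c i = 0 ∨ c i = 1 ∨ c i = 2 by omega) with h | h | h
  · -- zero vertex: source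
    have hne : i ≠ i₀ := by intro hEq; rw [hEq, hi₀] at h; omega
    have hf1 : f (i - 1) = false := by
      rw [hf]
      simp only
      split
      · rfl
      · rw [show i - 1 + 1 = i by ring]
        exact hg_zero i h
    have hf2 : f i = true := by
      simp only [hf]
      rw [if_neg hne]
      -- need g (i + 1) = true
      exact hg_after_zero i h
    rw [indeg, hf1, hf2, h]
    simp
  · -- one vertex
    have hne : i ≠ i₀ := by intro hEq; rw [hEq, hi₀] at h; omega
    rw [indeg, h]
    by_cases hprev : i - 1 = i₀
    · have hf1 : f (i - 1) = false := by simp only [hf]; rw [if_pos hprev]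
      rw [hf1]
      simp
      split <;> omega
    · have hf1 : f (i - 1) = g i := by
        simp only [hf]
        rw [if_neg hprev, show i - 1 + 1 = i by ring]
      have hf2 : f i = g (i + 1) := by simp only [hf]; rw [if_neg hne]
      rw [hf1, hf2, ← hg_one i h]
      cases hgi : g i <;> simp
  · rw [indeg, h]
    split <;> split <;> omega

theorem asm_rec_wheel_iff (n : ℕ) (hn : 3 ≤ n) (c : ZMod n → ℕ) (hst : ∀ i, c i ≤ 2) :
    (∃ f : ZMod n → Bool, (∀ i, indeg n f i ≤ c i) ∧ AcyclicOrientation n f) ↔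
      (ZeroTwoCond n c ∧ ∃ i, c i = 2) := by
  constructor
  · rintro ⟨f, hcomp, hacyc⟩
    obtain ⟨s, hs1, hs2⟩ := exists_flip n (by omega) f hacyc
    exact forward_dir n hn c hst f hcomp s hs1 hs2
  · rintro ⟨hzt, i₀, hi₀⟩
    obtain ⟨f, hcomp, hf1, hf2⟩ := backward_dir n hn c hst hzt i₀ hi₀
    exact ⟨f, hcomp, acyclic_of_flip n (by omega) f i₀ hf1 hf2⟩
end
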